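/- arXiv:1611.03071 — 4 statements merged into one kernel-verified Lean document; each statement's English description precedes it below -/
import Mathlib

section
/- Fix an integer n ≥ 2 and γ ∈ (1/2, 1). In the lower-bound chain with n states and MDP M(1), for every start state i ∈ {1,…,n} and every action sequence a : ℕ → Bool, the γ-discounted reward of a from i is strictly less than (1 + 2·γ^{n−i+1}) / (2·(1−γ)); in particular V*(i) < (1 + 2·γ^{n−i+1}) / (2·(1−γ)). -/
/-- The deterministic trajectory in the lower-bound chain with states `{1, …, n}`:
from state `s`, action `true` moves right (capped at `n`), action `false` resets to `1`. -/
def traj (n : ℕ) (a : ℕ → Bool) (s : ℕ) : ℕ → ℕ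
  | 0 => s
  | t + 1 => if a t then min (traj n a s t + 1) n else 1

/-- The reward of a state in the MDP `M(1)`: `1/2` at states `1, …, n-1` and `1` at state `n`. -/
noncomputable def reward (n : ℕ) (s : ℕ) : ℝ := if s < n then 1 / 2 else 1

/-- The `γ`-discounted reward of the action sequence `a` started from state `s`. -/
noncomputable def discReward (n : ℕ) (γ : ℝ) (a : ℕ → Bool) (s : ℕ) : ℝ :=
  ∑' t : ℕ, γ ^ t * reward n (traj n a s t)

/-- The optimal value `V*(s)`: the supremum of the `γ`-discounted reward over
all action sequences. -/
noncomputable def Vstar (n : ℕ) (γ : ℝ) (s : ℕ) : ℝ :=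
  ⨆ a : ℕ → Bool, discReward n γ a s

/-!
Starting from `i`, the chain moves at most one state per step, so it cannot reach the
rewarding state `n` before time `n - i`: the reward is at most `1/2` before that time and at
most `1` afterwards. Summing this against `γ^t` bounds the discounted reward by
`(1 + γ^(n-i)) / (2(1-γ))`, which is strictly below the claimed bound because `γ > 1/2`
gives `γ^(n-i) < 2γ^(n-i+1)`.
-/

theorem traj_le_add (n : ℕ) (a : ℕ → Bool) (s t : ℕ) : traj n a s t ≤ s + t := by
  induction t with
  | zero => simp [traj]
  | succ t ih =>
    simp only [traj]
    split
    · exact (min_le_left _ _).trans (by omega)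
    · omega

theorem reward_nonneg (n s : ℕ) : 0 ≤ reward n s := by
  unfold reward; split <;> norm_num

theorem reward_le_one (n s : ℕ) : reward n s ≤ 1 := by
  unfold reward; split <;> norm_num

theorem reward_traj_le (n : ℕ) (a : ℕ → Bool) (s t : ℕ) :
    reward n (traj n a s t) ≤ if n - s ≤ t then 1 else 1 / 2 := by
  split
  · exact reward_le_one n _
  · have : traj n a s t < n := (traj_le_add n a s t).trans_lt (by omega)
    simp [reward, this]

section Geometric

variable {γ : ℝ} (hγ0 : 0 ≤ γ) (hγ1 : γ < 1)
include hγ0 hγ1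

theorem hasSum_geometric_tail (k : ℕ) :
    HasSum (fun t ↦ if k ≤ t then γ ^ t else 0) (γ ^ k / (1 - γ)) := by
  have hzero : ∑ t ∈ Finset.range k, (if k ≤ t then γ ^ t else 0) = 0 :=
    Finset.sum_eq_zero fun t ht ↦ if_neg (by simpa using ht)
  have hshift : (fun t ↦ if k ≤ t + k then γ ^ (t + k) else 0) = fun t ↦ γ ^ k * γ ^ t :=
    funext fun t ↦ by rw [if_pos (Nat.le_add_left k t), pow_add, mul_comm]
  have h := (hasSum_geometric_of_lt_one hγ0 hγ1).mul_left (γ ^ k)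
  rw [← div_eq_mul_inv, ← hshift] at h
  have h' := (hasSum_nat_add_iff (f := fun t ↦ if k ≤ t then γ ^ t else 0) k).1 h
  rwa [hzero, add_zero] at h'

theorem hasSum_geometric_mul_ite_one_half (k : ℕ) :
    HasSum (fun t ↦ γ ^ t * if k ≤ t then 1 else 1 / 2) ((1 + γ ^ k) / (2 * (1 - γ))) := by
  have hsplit : (fun t ↦ γ ^ t * if k ≤ t then 1 else 1 / 2) =
      fun t ↦ (γ ^ t + if k ≤ t then γ ^ t else 0) / 2 :=
    funext fun t ↦ by split <;> ring
  have hγ1' : 1 - γ ≠ 0 := by linarith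
  rw [hsplit, show (1 + γ ^ k) / (2 * (1 - γ)) = ((1 - γ)⁻¹ + γ ^ k / (1 - γ)) / 2 by
    field_simp]
  exact ((hasSum_geometric_of_lt_one hγ0 hγ1).add (hasSum_geometric_tail hγ0 hγ1 k)).div_const 2

theorem discReward_le (n : ℕ) (a : ℕ → Bool) (s : ℕ) :
    discReward n γ a s ≤ (1 + γ ^ (n - s)) / (2 * (1 - γ)) := by
  have hle : ∀ t,
      γ ^ t * reward n (traj n a s t) ≤ γ ^ t * if n - s ≤ t then 1 else 1 / 2 :=
    fun t ↦ mul_le_mul_of_nonneg_left (reward_traj_le n a s t) (pow_nonneg hγ0 t)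
  have hsum := hasSum_geometric_mul_ite_one_half hγ0 hγ1 (n - s)
  have hsummable : Summable fun t ↦ γ ^ t * reward n (traj n a s t) :=
    hsum.summable.of_nonneg_of_le (fun t ↦ mul_nonneg (pow_nonneg hγ0 t) (reward_nonneg n _)) hle
  exact hasSum_le hle hsummable.hasSum hsum

end Geometric

theorem one_add_pow_div_lt {γ : ℝ} (hγ : 1 / 2 < γ) (hγ1 : γ < 1) (k : ℕ) :
    (1 + γ ^ k) / (2 * (1 - γ)) < (1 + 2 * γ ^ (k + 1)) / (2 * (1 - γ)) := by
  have hpos : 0 < γ ^ k := pow_pos (by linarith) k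
  rw [div_lt_div_iff_of_pos_right (by linarith), pow_succ]
  nlinarith

theorem vstar_upper_bound_general (n : ℕ) (γ : ℝ) (hγ : 1 / 2 < γ) (hγ1 : γ < 1)
    (i : ℕ) :
    (∀ a : ℕ → Bool, discReward n γ a i < (1 + 2 * γ ^ (n - i + 1)) / (2 * (1 - γ))) ∧
    Vstar n γ i < (1 + 2 * γ ^ (n - i + 1)) / (2 * (1 - γ)) := by
  have hγ0 : 0 ≤ γ := by linarith
  have hlt := one_add_pow_div_lt hγ hγ1 (n - i)
  exact ⟨fun a ↦ (discReward_le hγ0 hγ1 n a i).trans_lt hlt,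
    (ciSup_le fun a ↦ discReward_le hγ0 hγ1 n a i).trans_lt hlt⟩

/-- the paper's Lemma 9. In the chain MDP `M(1)` with `n ≥ 2` states and
`γ ∈ (1/2, 1)`, every action sequence from a start state `i ∈ {1,…,n}` gets discounted reward
strictly below `(1 + 2γ^(n-i+1)) / (2(1-γ))`; in particular `V*(i)` is below this bound. -/
theorem vstar_upper_bound (n : ℕ) (hn : 2 ≤ n) (γ : ℝ) (hγ : 1 / 2 < γ) (hγ1 : γ < 1)
    (i : ℕ) (hi1 : 1 ≤ i) (hin : i ≤ n) :
    (∀ a : ℕ → Bool, discReward n γ a i < (1 + 2 * γ ^ (n - i + 1)) / (2 * (1 - γ))) ∧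
    Vstar n γ i < (1 + 2 * γ ^ (n - i + 1)) / (2 * (1 - γ)) :=
  vstar_upper_bound_general n γ hγ hγ1 i
end

section
/- Fix an integer n ≥ 2. In the lower-bound chain with n states, consider the trajectory started from state 1 under an action sequence a : ℕ → Bool. If for some time t and some integer j with 2 ≤ j ≤ n the trajectory satisfies S_t ≥ j, then the action sequence contains j−1 consecutive true values ending before time t: there exists an index i with i + (j−1) ≤ t such that a(i+l) = true for all l < j−1. -/
/-- Strong form: the run of `true`s ends exactly at time `t`. -/
lemma run_ending (n : ℕ) (a : ℕ → Bool) :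
    ∀ t j, 2 ≤ j → j ≤ traj n a 1 t →
      j - 1 ≤ t ∧ ∀ l < j - 1, a (t - 1 - l) = true := by
  intro t
  induction t with
  | zero => intro j hj2 h; simp [traj] at h; omega
  | succ t ih =>
    intro j hj2 h
    simp only [traj] at h
    by_cases hat : a t
    · simp [hat] at h
      have hj : j ≤ traj n a 1 t + 1 := h.1
      rcases Nat.lt_or_ge j 3 with hj3 | hj3
      · -- j = 2
        have hj2' : j = 2 := by omega
        subst hj2'
        refine ⟨by omega, ?_⟩
        intro l hl
        have : l = 0 := by omega
        subst this
        simpa using hat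
      · have hprev : j - 1 ≤ traj n a 1 t := by omega
        obtain ⟨h1, h2⟩ := ih (j - 1) (by omega) hprev
        refine ⟨by omega, ?_⟩
        intro l hl
        rcases Nat.eq_zero_or_pos l with rfl | hl0
        · simpa using hat
        · have heq : t + 1 - 1 - l = t - 1 - (l - 1) := by omega
          rw [heq]
          exact h2 (l - 1) (by omega)
    · simp [hat] at h; omega

/-- combinatorial heart of the lower bounds. If the trajectory started
from state `1` in the chain with `n` states reaches a state `≥ j` at time `t`, then the
action sequence contains `j - 1` consecutive `true`s ending by time `t`. -/
theorem reach_requires_run (n : ℕ) (hn : 2 ≤ n) (a : ℕ → Bool) (t j : ℕ)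
    (hj2 : 2 ≤ j) (hjn : j ≤ n) (ht : j ≤ traj n a 1 t) :
    ∃ i : ℕ, i + (j - 1) ≤ t ∧ ∀ l < j - 1, a (i + l) = true := by
  obtain ⟨h1, h2⟩ := run_ending n a t j hj2 ht
  refine ⟨t - (j - 1), by omega, ?_⟩
  intro l hl
  have heq : t - (j - 1) + l = t - 1 - (j - 2 - l) := by omega
  rw [heq]
  exact h2 (j - 2 - l) (by omega)
end

section
/- For all reals c ∈ (0, 1) and γ ∈ (0, 1), one has (2γ − 1) · γ^{(1−c)/(1−γ)} < e^{c−1}. -/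
/-- For `c, γ ∈ (0,1)`, one has `(2γ - 1) * γ^((1-c)/(1-γ)) < e^(c-1)`,
where `γ^((1-c)/(1-γ))` is the real power. -/
theorem mul_rpow_lt_exp (c γ : ℝ) (hc0 : 0 < c) (hc1 : c < 1) (hγ0 : 0 < γ) (hγ1 : γ < 1) :
    (2 * γ - 1) * γ ^ ((1 - c) / (1 - γ)) < Real.exp (c - 1) := by
  have hx : (0:ℝ) < γ ^ ((1 - c) / (1 - γ)) := Real.rpow_pos_of_pos hγ0 _
  have hlog : Real.log γ < γ - 1 := Real.log_lt_sub_one_of_pos hγ0 (ne_of_lt hγ1)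
  have hfrac : 0 < (1 - c) / (1 - γ) := div_pos (by linarith) (by linarith)
  have h2 : ((1 - c) / (1 - γ)) * Real.log γ < c - 1 := by
    have hm : ((1 - c) / (1 - γ)) * Real.log γ < ((1 - c) / (1 - γ)) * (γ - 1) :=
      mul_lt_mul_of_pos_left hlog hfrac
    have heq : ((1 - c) / (1 - γ)) * (γ - 1) = c - 1 := by
      have hne : (1:ℝ) - γ ≠ 0 := by linarith
      rw [div_mul_eq_mul_div, div_eq_iff hne]; ring
    linarith
  have h3 : γ ^ ((1 - c) / (1 - γ)) < Real.exp (c - 1) := by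
    rw [Real.rpow_def_of_pos hγ0, mul_comm]
    exact Real.exp_lt_exp.mpr h2
  calc (2 * γ - 1) * γ ^ ((1 - c) / (1 - γ))
      < 1 * γ ^ ((1 - c) / (1 - γ)) := mul_lt_mul_of_pos_right (by linarith) hx
    _ = γ ^ ((1 - c) / (1 - γ)) := one_mul _
    _ < Real.exp (c - 1) := h3
end

section
/- For all reals c ∈ (1/2, 1) and γ with c ≤ γ < 1, one has (3/4 − 2^{(c−1)/(1−γ)}) · (1 − (2γ−1)·γ^{(1−c)/(1−γ)}) > (1/4)·(1 − e^{c−1}). -/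
/-- final step of the proof of the paper's Theorem 3. For
`c ∈ (1/2, 1)` and `c ≤ γ < 1`,
`(3/4 - 2^((c-1)/(1-γ))) * (1 - (2γ-1) * γ^((1-c)/(1-γ))) > (1/4) * (1 - e^(c-1))`. -/
theorem composite_gap_ineq (c γ : ℝ) (hc : 1 / 2 < c) (hc1 : c < 1)
    (hcγ : c ≤ γ) (hγ1 : γ < 1) :
    (3 / 4 - (2 : ℝ) ^ ((c - 1) / (1 - γ))) *
      (1 - (2 * γ - 1) * γ ^ ((1 - c) / (1 - γ))) >
      1 / 4 * (1 - Real.exp (c - 1)) := by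
  have hγ0 : 0 < γ := lt_trans (by norm_num) (lt_of_lt_of_le hc hcγ)
  have h1γ : 0 < 1 - γ := by linarith
  have ht : 0 < (1 - c) / (1 - γ) := div_pos (by linarith) h1γ
  have hexp : (c - 1) / (1 - γ) ≤ -1 := by
    rw [div_le_iff₀ h1γ]; linarith
  have h2 : (2 : ℝ) ^ ((c - 1) / (1 - γ)) ≤ 1 / 2 := by
    calc (2 : ℝ) ^ ((c - 1) / (1 - γ)) ≤ (2 : ℝ) ^ (-1 : ℝ) :=
          Real.rpow_le_rpow_of_exponent_le one_le_two hexp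
      _ = 1 / 2 := by rw [Real.rpow_neg_one]; norm_num
  have hlog : Real.log γ < γ - 1 := Real.log_lt_sub_one_of_pos hγ0 (by linarith)
  have hγt : γ ^ ((1 - c) / (1 - γ)) < Real.exp (c - 1) := by
    rw [Real.rpow_def_of_pos hγ0]
    apply Real.exp_lt_exp.mpr
    have h1 : Real.log γ * ((1 - c) / (1 - γ)) < (γ - 1) * ((1 - c) / (1 - γ)) :=
      mul_lt_mul_of_pos_right hlog ht
    have heq : (γ - 1) * ((1 - c) / (1 - γ)) = c - 1 := by
      field_simp; ring
    linarith
  have hp : (0 : ℝ) < γ ^ ((1 - c) / (1 - γ)) := Real.rpow_pos_of_pos hγ0 _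
  have h2γ : 2 * γ - 1 < 1 := by linarith
  have hγt2 : (2 * γ - 1) * γ ^ ((1 - c) / (1 - γ)) < Real.exp (c - 1) := by
    nlinarith
  have he : Real.exp (c - 1) < 1 := by
    have := Real.exp_lt_exp.mpr (show c - 1 < 0 by linarith)
    rwa [Real.exp_zero] at this
  nlinarith [hγt2, h2, he, hp]
end
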